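/- arXiv:1705.04422 — 4 statements merged into one kernel-verified Lean document; each statement's English description precedes it below -/
import Mathlib

section
/- Let κ be a regular uncountable cardinal and let γ ≤ κ be an ordinal. Then the following are equivalent: (i) there is a function ℓ : κ → κ such that for every α < γ there is a normal measure U on κ with {ξ < κ : ℓ(ξ) = α} ∈ U; (ii) there exist at least |γ| many pairwise distinct normal measures on κ. -/
/-!
If `ℓ` guesses `α ≠ β` with normal measures `U`, `V`, then `U ≠ V` because the fibres
`ℓ⁻¹{α}` and `ℓ⁻¹{β}` are disjoint. Conversely, given distinct normal measures `μ a`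
(`a < γ ≤ κ`), pick for `a ≠ b` sets `D a b ∈ μ a` with `D a b ∩ D b a = ∅`. By normality
the diagonal intersection `A a = {ξ > a : ∀ b < ξ, ξ ∈ D a b}` lies in `μ a`, and the sets
`A a` are pairwise disjoint: a point of `A a ∩ A b` lies above `a` and `b`, hence in
`D a b ∩ D b a`. Now let `ℓ` take the value `a` on `A a`.
-/

/-- A *normal measure* on (the set of ordinals below) `κ`: an ultrafilter on `κ`
that is proper, uniform (contains all final segments of `κ`) and normal
(closed under diagonal intersections). -/
structure NormalMeasure (κ : Ordinal) where
  sets : Set (Set Ordinal)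
  sets_subset : ∀ X ∈ sets, X ⊆ Set.Iio κ
  univ_mem : Set.Iio κ ∈ sets
  empty_not_mem : ∅ ∉ sets
  superset_mem : ∀ X ∈ sets, ∀ Y, X ⊆ Y → Y ⊆ Set.Iio κ → Y ∈ sets
  inter_mem : ∀ X ∈ sets, ∀ Y ∈ sets, X ∩ Y ∈ sets
  ultra : ∀ X, X ⊆ Set.Iio κ → X ∈ sets ∨ Set.Iio κ \ X ∈ sets
  uniform : ∀ α < κ, {ξ : Ordinal | α ≤ ξ ∧ ξ < κ} ∈ sets
  normal : ∀ f : Ordinal → Set Ordinal, (∀ α < κ, f α ∈ sets) →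
      {ξ : Ordinal | ξ < κ ∧ ∀ α < ξ, ξ ∈ f α} ∈ sets

open Function Order Set

namespace NormalMeasure

variable {κ : Ordinal} {U V : NormalMeasure κ} {X Y : Set Ordinal}

theorem ext (h : U.sets = V.sets) : U = V := by
  cases U; cases V; congr

theorem inter_nonempty (hX : X ∈ U.sets) (hY : Y ∈ U.sets) : (X ∩ Y).Nonempty :=
  nonempty_iff_ne_empty.2 fun h => U.empty_not_mem (h ▸ U.inter_mem X hX Y hY)

theorem diff_mem_of_notMem (hX : X ⊆ Iio κ) (h : X ∉ U.sets) : Iio κ \ X ∈ U.sets :=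
  (U.ultra X hX).resolve_left h

theorem exists_mem_notMem_of_ne (h : U ≠ V) : ∃ X ∈ U.sets, X ∉ V.sets := by
  by_contra! hUV
  refine h (ext (Subset.antisymm hUV fun Y hY => ?_))
  by_contra hYU
  have hYκ := V.sets_subset Y hY
  obtain ⟨ξ, hξY, -, hξ⟩ := V.inter_nonempty hY (hUV _ (U.diff_mem_of_notMem hYκ hYU))
  exact hξ hξY

theorem setOf_lt_mem (hκ : IsSuccLimit κ) {α : Ordinal} (hα : α < κ) :
    {ξ | α < ξ ∧ ξ < κ} ∈ U.sets := by
  simpa only [succ_le_iff] using U.uniform (succ α) (hκ.succ_lt hα)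

theorem diagonal_mem {ι : Type*} {e : ι → Ordinal} (he : Injective e) {X : ι → Set Ordinal}
    (hX : ∀ i, e i < κ → X i ∈ U.sets) :
    {ξ | ξ < κ ∧ ∀ i, e i < ξ → ξ ∈ X i} ∈ U.sets := by
  classical
  set f := extend e X fun _ => Iio κ
  have hf : ∀ α < κ, f α ∈ U.sets := by
    intro α hα
    by_cases hrange : ∃ i, e i = α
    · obtain ⟨i, rfl⟩ := hrange
      simpa only [f, he.extend_apply] using hX i hα
    · simpa only [f, extend_apply' _ _ _ hrange] using U.univ_mem
  refine U.superset_mem _ (U.normal f hf) _ ?_ fun ξ hξ => hξ.1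
  rintro ξ ⟨hξκ, hξ⟩
  exact ⟨hξκ, fun i hi => by simpa only [f, he.extend_apply] using hξ (e i) hi⟩

variable {ι : Type*} {μ : ι → NormalMeasure κ}

theorem exists_disjoint_mem_of_injective (hμ : Injective μ) :
    ∃ D : ι → ι → Set Ordinal, (∀ a b, D a b ∈ (μ a).sets) ∧
      ∀ a b, a ≠ b → Disjoint (D a b) (D b a) := by
  classical
  choose S hSa hSb using fun a b (h : a ≠ b) => exists_mem_notMem_of_ne (hμ.ne h)
  have hSκ : ∀ a b (h : a ≠ b), S a b h ⊆ Iio κ := fun a b h => (μ a).sets_subset _ (hSa a b h)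
  refine ⟨fun a b => if h : a = b then Iio κ else S a b h ∩ (Iio κ \ S b a (Ne.symm h)),
    fun a b => ?_, fun a b h => ?_⟩
  · dsimp only
    split_ifs with h
    · exact (μ a).univ_mem
    · exact (μ a).inter_mem _ (hSa a b h) _
        ((μ a).diff_mem_of_notMem (hSκ b a _) (hSb b a (Ne.symm h)))
  · simp only [dif_neg h, dif_neg (Ne.symm h)]
    exact disjoint_of_subset inter_subset_right inter_subset_left disjoint_sdiff_left

theorem exists_pairwise_disjoint_mem_of_injective (hκ : IsSuccLimit κ) {e : ι → Ordinal}
    (he : Injective e) (heκ : ∀ i, e i < κ) (hμ : Injective μ) :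
    ∃ A : ι → Set Ordinal, (∀ i, A i ∈ (μ i).sets) ∧ Pairwise (Disjoint on A) := by
  obtain ⟨D, hDμ, hD⟩ := exists_disjoint_mem_of_injective hμ
  refine ⟨fun a => {ξ | e a < ξ ∧ ξ < κ} ∩ {ξ | ξ < κ ∧ ∀ b, e b < ξ → ξ ∈ D a b},
    fun a => (μ a).inter_mem _ ((μ a).setOf_lt_mem hκ (heκ a)) _
      ((μ a).diagonal_mem he fun b _ => hDμ a b), fun a b hab => ?_⟩
  refine disjoint_left.2 ?_
  rintro ξ ⟨⟨haξ, -⟩, -, hDa⟩ ⟨⟨hbξ, -⟩, -, hDb⟩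
  exact disjoint_left.1 (hD a b hab) (hDa b hbξ) (hDb a haξ)

end NormalMeasure

theorem exists_forall_mem_eq_of_pairwise_disjoint {ι α β : Type*} {A : ι → Set α}
    (hA : Pairwise (Disjoint on A)) (v : ι → β) (b : β) :
    ∃ f : α → β, (∀ i, ∀ x ∈ A i, f x = v i) ∧ ∀ x, f x = b ∨ f x ∈ range v := by
  classical
  refine ⟨fun x => if h : ∃ i, x ∈ A i then v h.choose else b, fun i x hx => ?_, fun x => ?_⟩
  · have h : ∃ i, x ∈ A i := ⟨i, hx⟩
    have hi : h.choose = i := by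
      by_contra hne
      exact disjoint_left.1 (hA hne) h.choose_spec hx
    simp only [dif_pos h, hi]
  · dsimp only
    split_ifs
    exacts [Or.inr ⟨_, rfl⟩, Or.inl rfl]

theorem stmt1_general (c : Cardinal) (hreg : c.IsRegular)
    (γ : Ordinal) (hγ : γ ≤ c.ord) :
    (∃ ℓ : Ordinal → Ordinal, (∀ ξ < c.ord, ℓ ξ < c.ord) ∧
        ∀ α < γ, ∃ U : NormalMeasure c.ord,
          {ξ : Ordinal | ξ < c.ord ∧ ℓ ξ = α} ∈ U.sets) ↔
      (∃ μ : {α : Ordinal // α < γ} → NormalMeasure c.ord, Function.Injective μ) := by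
  have hκ : IsSuccLimit c.ord := Cardinal.isSuccLimit_ord hreg.aleph0_le
  constructor
  · rintro ⟨ℓ, -, hguess⟩
    choose U hU using hguess
    refine ⟨fun a => U a.1 a.2, fun a b (hab : U a.1 a.2 = U b.1 b.2) => Subtype.ext ?_⟩
    obtain ⟨ξ, ⟨-, ha⟩, -, hb⟩ := (U a.1 a.2).inter_nonempty (hU a.1 a.2)
      (hab ▸ hU b.1 b.2)
    exact ha ▸ hb
  · rintro ⟨μ, hμ⟩
    obtain ⟨A, hAμ, hA⟩ := NormalMeasure.exists_pairwise_disjoint_mem_of_injective hκ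
      Subtype.val_injective (fun a => a.2.trans_le hγ) hμ
    obtain ⟨ℓ, hℓA, hℓ⟩ := exists_forall_mem_eq_of_pairwise_disjoint hA Subtype.val 0
    refine ⟨ℓ, fun ξ _ => ?_, fun α hα => ⟨μ ⟨α, hα⟩, ?_⟩⟩
    · rcases hℓ ξ with h | ⟨a, h⟩
      · exact h ▸ hκ.bot_lt
      · exact h ▸ a.2.trans_le hγ
    · refine (μ _).superset_mem _ (hAμ _) _ (fun ξ hξ => ⟨?_, hℓA _ ξ hξ⟩) fun ξ h => h.1
      exact (μ _).sets_subset _ (hAμ _) hξ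

/-- For a regular uncountable cardinal `κ` and an ordinal `γ ≤ κ`, the following are
equivalent: (i) there is a function `ℓ : κ → κ` such that every `α < γ` is guessed,
i.e. `{ξ < κ : ℓ ξ = α}` belongs to some normal measure on `κ`; (ii) there are at
least `|γ|` many pairwise distinct normal measures on `κ`. -/
theorem stmt1 (c : Cardinal) (hreg : c.IsRegular) (hunc : Cardinal.aleph0 < c)
    (γ : Ordinal) (hγ : γ ≤ c.ord) :
    (∃ ℓ : Ordinal → Ordinal, (∀ ξ < c.ord, ℓ ξ < c.ord) ∧
        ∀ α < γ, ∃ U : NormalMeasure c.ord,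
          {ξ : Ordinal | ξ < c.ord ∧ ℓ ξ = α} ∈ U.sets) ↔
      (∃ μ : {α : Ordinal // α < γ} → NormalMeasure c.ord, Function.Injective μ) :=
  stmt1_general c hreg γ hγ
end

section
/- Let κ be a regular uncountable cardinal. The following are equivalent: (1) there is a ◊_κ-sequence; (2) there is a jd_{κ,κ}-sequence; (3) there is a jd_{κ,2^κ}-sequence; (4) there is a ◊_κ-tree. -/
/-- A proper, normal, uniform filter on (the set of ordinals below) `κ`. -/
structure NormalUniformFilter (κ : Ordinal) where
  sets : Set (Set Ordinal)
  sets_subset : ∀ X ∈ sets, X ⊆ Set.Iio κ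
  univ_mem : Set.Iio κ ∈ sets
  empty_not_mem : ∅ ∉ sets
  superset_mem : ∀ X ∈ sets, ∀ Y, X ⊆ Y → Y ⊆ Set.Iio κ → Y ∈ sets
  inter_mem : ∀ X ∈ sets, ∀ Y ∈ sets, X ∩ Y ∈ sets
  uniform : ∀ α < κ, {ξ : Ordinal | α ≤ ξ ∧ ξ < κ} ∈ sets
  normal : ∀ f : Ordinal → Set Ordinal, (∀ α < κ, f α ∈ sets) →
      {ξ : Ordinal | ξ < κ ∧ ∀ α < ξ, ξ ∈ f α} ∈ sets

/-- `C` is club in `κ`: a subset of `κ` that is unbounded in `κ` and closed under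
suprema of its bounded nonempty subsets. -/
def IsClubIn (κ : Ordinal) (C : Set Ordinal) : Prop :=
  C ⊆ Set.Iio κ ∧ (∀ α < κ, ∃ β ∈ C, α ≤ β) ∧
    ∀ s ⊆ C, s.Nonempty → sSup s < κ → sSup s ∈ C

/-- `S` is stationary in `κ`: it meets every club subset of `κ`. -/
def IsStationaryIn (κ : Ordinal) (S : Set Ordinal) : Prop :=
  ∀ C, IsClubIn κ C → (S ∩ C).Nonempty

/-- `d` is a `κ`-list: a function on `κ` with `d ξ ⊆ ξ` for all `ξ < κ`. -/
def IsKappaList (κ : Ordinal) (d : Ordinal → Set Ordinal) : Prop :=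
  ∀ ξ < κ, d ξ ⊆ Set.Iio ξ

/-- The guessing set `S(d,a) = {ξ < κ : d ξ = a ∩ ξ}` of a `κ`-list `d` at a target
`a ⊆ κ`. -/
def guessSet (κ : Ordinal) (d : Ordinal → Set Ordinal) (a : Set Ordinal) : Set Ordinal :=
  {ξ : Ordinal | ξ < κ ∧ d ξ = a ∩ Set.Iio ξ}

/-- The family of `κ`-lists `⟨d β : β ∈ I⟩` guesses jointly: for every choice of
targets `a β ⊆ κ` (for `β ∈ I`) there is a single proper normal uniform filter on `κ`
containing all the guessing sets `S(d β, a β)` for `β ∈ I`. -/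
def JointGuess (κ : Ordinal) (I : Set Ordinal) (d : Ordinal → Ordinal → Set Ordinal) : Prop :=
  ∀ a : Ordinal → Set Ordinal, (∀ β ∈ I, a β ⊆ Set.Iio κ) →
    ∃ F : NormalUniformFilter κ, ∀ β ∈ I, guessSet κ (d β) (a β) ∈ F.sets

/-- `D` is a `◊_κ`-tree: a labelling of the binary tree of height `κ` (here `D ξ s`
is the label at the node `s↾ξ`, so `D ξ s` depends only on `s` below `ξ` and is a
subset of `κ`) such that for any assignment of targets `a s ⊆ κ` to the branches
`s : κ → 2` (so `a s` depends only on `s` below `κ`) there is a proper normal uniform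
filter on `κ` containing all the guessing sets `{ξ < κ : D (s↾ξ) = a s ∩ ξ}`. -/
def IsDiamondTree (κ : Ordinal) (D : Ordinal → (Ordinal → Bool) → Set Ordinal) : Prop :=
  (∀ ξ < κ, ∀ s, D ξ s ⊆ Set.Iio κ) ∧
  (∀ ξ < κ, ∀ s t : Ordinal → Bool, (∀ η < ξ, s η = t η) → D ξ s = D ξ t) ∧
  ∀ a : (Ordinal → Bool) → Set Ordinal, (∀ s, a s ⊆ Set.Iio κ) →
    (∀ s t : Ordinal → Bool, (∀ η < κ, s η = t η) → a s = a t) →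
    ∃ F : NormalUniformFilter κ, ∀ s : Ordinal → Bool,
      {ξ : Ordinal | ξ < κ ∧ D ξ s = a s ∩ Set.Iio ξ} ∈ F.sets

/-!
(2) ⇒ (1) because members of a normal uniform filter are stationary, (3) ⇒ (2) by restriction,
and (4) ⇒ (3) by following `2^κ` branches of the tree with distinct restrictions to `κ`.

For (1) ⇒ (4), at each `ξ` the `◊_κ`-sequence is read as a code of a `ξ`-sequence of pairs
(branch, target), and the tree labels a node by the target of a coded pair whose branch passes
through it. Given branches `⟨σ α : α < κ⟩`, guess the code of the whole sequence
`⟨(σ α, a (σ α)) : α < κ⟩`; at the stationarily many correct guesses `ξ` that are closed under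
pairing and under points separating the branches, the label of every `σ α` with `α < ξ` is right.
So every diagonal intersection of guessing sets of the tree is stationary, and the sets containing
one of them on a club form a proper normal uniform filter.
-/

open Cardinal Order Set

universe u

section Clubs

variable {κ : Ordinal.{u}} {c : Cardinal.{u}}

def diagInter (κ : Ordinal.{u}) (f : Ordinal.{u} → Set Ordinal.{u}) : Set Ordinal.{u} :=
  {ξ | ξ < κ ∧ ∀ α < ξ, ξ ∈ f α}

def closurePoints (κ : Ordinal.{u}) (g : Ordinal.{u} → Ordinal.{u} → Ordinal.{u}) :
    Set Ordinal.{u} :=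
  {ξ | ξ < κ ∧ 0 < ξ ∧ ∀ α < ξ, ∀ β < ξ, g α β < ξ}

theorem isClubIn_Iio : IsClubIn κ (Iio κ) :=
  ⟨subset_rfl, fun α hα => ⟨α, hα, le_rfl⟩, fun _ _ _ hlt => hlt⟩

theorem isClubIn_tail {α : Ordinal.{u}} (hα : α < κ) : IsClubIn κ {ξ | α ≤ ξ ∧ ξ < κ} := by
  refine ⟨fun _ hξ => hξ.2, fun γ hγ => ⟨max α γ, ⟨le_max_left _ _, max_lt hα hγ⟩,
    le_max_right _ _⟩, fun s hs ⟨x, hx⟩ hlt => ⟨?_, hlt⟩⟩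
  exact (hs hx).1.trans (le_csSup ⟨κ, fun y hy => (hs hy).2.le⟩ hx)

theorem IsClubIn.mem_of_cofinal {C : Set Ordinal.{u}} (hC : IsClubIn κ C) {ξ : Ordinal.{u}}
    (hξκ : ξ < κ) (hξ : 0 < ξ) (hcof : ∀ η < ξ, ∃ γ ∈ C, η < γ ∧ γ < ξ) : ξ ∈ C := by
  have hbdd : BddAbove (C ∩ Iio ξ) := ⟨ξ, fun γ hγ => hγ.2.le⟩
  obtain ⟨γ₀, hγ₀, -, hγ₀ξ⟩ := hcof 0 hξ
  have hsup : sSup (C ∩ Iio ξ) = ξ := by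
    refine le_antisymm (csSup_le ⟨γ₀, hγ₀, hγ₀ξ⟩ fun γ hγ => hγ.2.le) (le_of_forall_lt ?_)
    intro η hη
    obtain ⟨γ, hγC, hηγ, hγξ⟩ := hcof η hη
    exact hηγ.trans_le (le_csSup hbdd ⟨hγC, hγξ⟩)
  have hmem := hC.2.2 (C ∩ Iio ξ) inter_subset_left ⟨γ₀, hγ₀, hγ₀ξ⟩ (by rwa [hsup])
  rwa [hsup] at hmem

theorem IsClubIn.exists_lt_mem {C : Set Ordinal.{u}} (hC : IsClubIn κ C) (hκ : IsSuccLimit κ)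
    {η : Ordinal.{u}} (hη : η < κ) : ∃ γ ∈ C, η < γ := by
  obtain ⟨γ, hγC, hγ⟩ := hC.2.1 (succ η) (hκ.succ_lt hη)
  exact ⟨γ, hγC, (lt_succ η).trans_le hγ⟩

theorem iSup_Iio_prod_lt_ord (hreg : c.IsRegular) (hunc : ℵ₀ < c)
    {g : Ordinal.{u} → Ordinal.{u} → Ordinal.{u}} (hg : ∀ α < c.ord, ∀ β < c.ord, g α β < c.ord)
    {x : Ordinal.{u}} (hx : x < c.ord) : (⨆ p : Iio x × Iio x, g p.1 p.2) < c.ord := by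
  refine Ordinal.lift_iSup_lt_of_lt_cof ?_ fun p => hg _ (p.1.2.trans hx) _ (p.2.2.trans hx)
  rw [← Ordinal.lift_cof, hreg.cof_ord, mk_prod, Cardinal.mk_Iio_ordinal,
    Cardinal.lift_id'.{u, u + 1}, Cardinal.lift_id, ← Cardinal.lift_mul, Cardinal.lift_lt]
  exact mul_lt_of_lt hunc.le (lt_ord.1 hx) (lt_ord.1 hx)

theorem isClubIn_closurePoints (hreg : c.IsRegular) (hunc : ℵ₀ < c)
    {g : Ordinal.{u} → Ordinal.{u} → Ordinal.{u}} (hg : ∀ α < c.ord, ∀ β < c.ord, g α β < c.ord) :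
    IsClubIn c.ord (closurePoints c.ord g) := by
  have hlim : IsSuccLimit c.ord := isSuccLimit_ord hunc.le
  refine ⟨fun _ hξ => hξ.1, fun α hα => ?_, fun s hs hne hlt => ?_⟩
  · -- `ξ` is the limit of the iterates of `x ↦ succ (sup g[x × x])`, starting above `α`
    set F : Ordinal.{u} → Ordinal.{u} := fun x => succ (⨆ p : Iio x × Iio x, g p.1 p.2)
    have hF : ∀ x < c.ord, F x < c.ord := fun x hx =>
      hlim.succ_lt (iSup_Iio_prod_lt_ord hreg hunc hg hx)
    have hαξ : succ α ≤ Ordinal.nfp F (succ α) := Ordinal.le_nfp F _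
    refine ⟨Ordinal.nfp F (succ α), ⟨Cardinal.nfp_lt_ord_of_isRegular hreg hunc.ne' hF
      (hlim.succ_lt hα), (bot_le.trans_lt (lt_succ α)).trans_le hαξ, fun β hβ γ hγ => ?_⟩,
      (le_succ α).trans hαξ⟩
    obtain ⟨m, hm⟩ := Ordinal.lt_nfp_iff.1 hβ
    obtain ⟨n, hn⟩ := Ordinal.lt_nfp_iff.1 hγ
    obtain ⟨k, hk⟩ : ∃ k, max (F^[m] (succ α)) (F^[n] (succ α)) = F^[k] (succ α) :=
      (max_choice _ _).elim (fun h => ⟨m, h⟩) (fun h => ⟨n, h⟩)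
    set x := F^[k] (succ α)
    calc g β γ ≤ ⨆ p : Iio x × Iio x, g p.1 p.2 :=
          Ordinal.le_iSup (fun p : Iio x × Iio x => g p.1 p.2)
            (⟨β, hm.trans_le ((le_max_left _ _).trans_eq hk)⟩,
              ⟨γ, hn.trans_le ((le_max_right _ _).trans_eq hk)⟩)
      _ < F x := lt_succ _
      _ = F^[k + 1] (succ α) := (Function.iterate_succ_apply' F k _).symm
      _ ≤ _ := Ordinal.iterate_le_nfp F _ _
  · have hbdd : BddAbove s := ⟨c.ord, fun y hy => (hs hy).1.le⟩
    obtain ⟨x₀, hx₀⟩ := hne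
    refine ⟨hlt, (hs hx₀).2.1.trans_le (le_csSup hbdd hx₀), fun β hβ γ hγ => ?_⟩
    obtain ⟨x, hx, hβx⟩ := exists_lt_of_lt_csSup ⟨x₀, hx₀⟩ hβ
    obtain ⟨y, hy, hγy⟩ := exists_lt_of_lt_csSup ⟨x₀, hx₀⟩ hγ
    have hmax : max x y ∈ s := by rcases max_choice x y with h | h <;> rw [h] <;> assumption
    exact ((hs hmax).2.2 β (hβx.trans_le (le_max_left x y)) γ
      (hγy.trans_le (le_max_right x y))).trans_le (le_csSup hbdd hmax)

theorem exists_isClubIn_subset_diagInter (hreg : c.IsRegular) (hunc : ℵ₀ < c)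
    {C : Ordinal.{u} → Set Ordinal.{u}} (hC : ∀ α < c.ord, IsClubIn c.ord (C α)) :
    ∃ D, IsClubIn c.ord D ∧ D ⊆ diagInter c.ord C := by
  choose! g hgC hlt using fun α (hα : α < c.ord) η (hη : η < c.ord) =>
    (hC α hα).exists_lt_mem (isSuccLimit_ord hunc.le) hη
  refine ⟨closurePoints c.ord g,
    isClubIn_closurePoints hreg hunc fun α hα η hη => (hC α hα).1 (hgC α hα η hη), ?_⟩
  rintro ξ ⟨hξκ, hξ, hcl⟩
  refine ⟨hξκ, fun α hα => (hC α (hα.trans hξκ)).mem_of_cofinal hξκ hξ fun η hη => ?_⟩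
  exact ⟨g α η, hgC α (hα.trans hξκ) η (hη.trans hξκ), hlt α (hα.trans hξκ) η (hη.trans hξκ),
    hcl α hα η hη⟩

theorem IsClubIn.inter (hreg : c.IsRegular) (hunc : ℵ₀ < c) {C₁ C₂ : Set Ordinal.{u}}
    (h₁ : IsClubIn c.ord C₁) (h₂ : IsClubIn c.ord C₂) : IsClubIn c.ord (C₁ ∩ C₂) := by
  classical
  obtain ⟨D, hD, hDsub⟩ := exists_isClubIn_subset_diagInter hreg hunc
    (C := fun α => if α = 0 then C₁ else C₂) fun α _ => by split_ifs <;> assumption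
  refine ⟨fun _ hξ => h₁.1 hξ.1, fun α hα => ?_, fun s hs hne hlt =>
    ⟨h₁.2.2 s (fun _ hx => (hs hx).1) hne hlt, h₂.2.2 s (fun _ hx => (hs hx).2) hne hlt⟩⟩
  -- `D` lies in the diagonal intersection of `C₁, C₂, C₂, …`, so its points above `1` lie in both
  have h2 : (2 : Ordinal.{u}) < c.ord :=
    mod_cast Ordinal.natCast_lt_of_isSuccLimit (isSuccLimit_ord hunc.le) 2
  obtain ⟨ξ, hξD, hαξ⟩ := hD.2.1 (max α 2) (max_lt hα h2)
  have h2ξ : (2 : Ordinal.{u}) ≤ ξ := (le_max_right _ _).trans hαξ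
  have hξ := (hDsub hξD).2
  refine ⟨ξ, ⟨?_, ?_⟩, (le_max_left _ _).trans hαξ⟩
  · simpa using hξ 0 (zero_lt_two.trans_le h2ξ)
  · simpa using hξ 1 (lt_of_lt_of_le one_lt_two h2ξ)

end Clubs

section NormalFilters

variable {κ : Ordinal.{u}} {c : Cardinal.{u}}

theorem IsClubIn.mem_sets (hκ : IsSuccLimit κ) (F : NormalUniformFilter κ) {C : Set Ordinal.{u}}
    (hC : IsClubIn κ C) : C ∈ F.sets := by
  choose! g hgC hlt using fun η (hη : η < κ) => hC.exists_lt_mem hκ hη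
  have hdiag := F.normal (fun η => {ξ | succ (g η) ≤ ξ ∧ ξ < κ})
    fun η hη => F.uniform _ (hκ.succ_lt (hC.1 (hgC η hη)))
  have hpos := F.inter_mem _ hdiag _ (F.uniform 1 (Ordinal.one_lt_of_isSuccLimit hκ))
  refine F.superset_mem _ hpos C ?_ hC.1
  rintro ξ ⟨⟨hξκ, hξ⟩, h1ξ, -⟩
  exact hC.mem_of_cofinal hξκ (zero_lt_one.trans_le h1ξ) fun η hη =>
    ⟨g η, hgC η (hη.trans hξκ), hlt η (hη.trans hξκ), succ_le_iff.1 (hξ η hη).1⟩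

theorem NormalUniformFilter.isStationaryIn_of_mem (hκ : IsSuccLimit κ)
    (F : NormalUniformFilter κ) {X : Set Ordinal.{u}} (hX : X ∈ F.sets) :
    IsStationaryIn κ X := fun _ hC =>
  nonempty_iff_ne_empty.2 fun h => F.empty_not_mem (h ▸ F.inter_mem _ hX _ (hC.mem_sets hκ F))

theorem exists_pairing (hunc : ℵ₀ < c) :
    ∃ (pair : Ordinal.{u} → Ordinal.{u} → Ordinal.{u})
      (unpair : Ordinal.{u} → Ordinal.{u} × Ordinal.{u}),
      ∀ α < c.ord, ∀ β < c.ord, pair α β < c.ord ∧ unpair (pair α β) = (α, β) := by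
  obtain ⟨e⟩ : Nonempty (Iio c.ord × Iio c.ord ≃ Iio c.ord) := Cardinal.eq.1 <| by
    rw [mk_prod, Cardinal.mk_Iio_ordinal, card_ord, Cardinal.lift_id,
      mul_eq_self (aleph0_le_lift.2 hunc.le)]
  refine ⟨fun α β => if h : α < c.ord ∧ β < c.ord then e (⟨α, h.1⟩, ⟨β, h.2⟩) else 0,
    fun γ => if h : γ < c.ord then ((e.symm ⟨γ, h⟩).1, (e.symm ⟨γ, h⟩).2) else (0, 0),
    fun α hα β hβ => ?_⟩
  simp only [dif_pos (And.intro hα hβ), Subtype.coe_eta, Equiv.symm_apply_apply]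
  exact ⟨(e _).2, dif_pos (e _).2⟩

theorem exists_diagInter_comp_subset_diagInter_diagInter (hreg : c.IsRegular) (hunc : ℵ₀ < c)
    {β : Type*} (T : β → Set Ordinal.{u}) (σ : Ordinal.{u} → Ordinal.{u} → β) :
    ∃ τ : Ordinal.{u} → β, ∃ E, IsClubIn c.ord E ∧
      E ∩ diagInter c.ord (T ∘ τ) ⊆ diagInter c.ord fun α => diagInter c.ord (T ∘ σ α) := by
  obtain ⟨pair, unpair, hpair⟩ := exists_pairing hunc
  refine ⟨fun γ => σ (unpair γ).1 (unpair γ).2, closurePoints c.ord pair,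
    isClubIn_closurePoints hreg hunc fun α hα β hβ => (hpair α hα β hβ).1, ?_⟩
  rintro ξ ⟨⟨hξκ, -, hcl⟩, -, hξ⟩
  refine ⟨hξκ, fun α hα => ⟨hξκ, fun β hβ => ?_⟩⟩
  have hmem := hξ _ (hcl α hα β hβ)
  rwa [Function.comp_apply, (hpair α (hα.trans hξκ) β (hβ.trans hξκ)).2] at hmem

end NormalFilters

section DiagonalFilter

variable {κ : Ordinal.{u}} {c : Cardinal.{u}} {β : Type*} [Nonempty β] (T : β → Set Ordinal.{u})

def diagonalFilterSets (κ : Ordinal.{u}) (T : β → Set Ordinal.{u}) : Set (Set Ordinal.{u}) :=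
  {X | X ⊆ Iio κ ∧ ∃ σ : Ordinal.{u} → β, ∃ C, IsClubIn κ C ∧ C ∩ diagInter κ (T ∘ σ) ⊆ X}

theorem IsClubIn.mem_diagonalFilterSets {C : Set Ordinal.{u}} (hC : IsClubIn κ C) :
    C ∈ diagonalFilterSets κ T :=
  ⟨hC.1, fun _ => Classical.arbitrary β, C, hC, inter_subset_left⟩

theorem diagInter_mem_diagonalFilterSets (hreg : c.IsRegular) (hunc : ℵ₀ < c)
    {f : Ordinal.{u} → Set Ordinal.{u}} (hf : ∀ α < c.ord, f α ∈ diagonalFilterSets c.ord T) :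
    diagInter c.ord f ∈ diagonalFilterSets c.ord T := by
  choose! σ C hC hsub using fun α hα => (hf α hα).2
  obtain ⟨D, hD, hDsub⟩ := exists_isClubIn_subset_diagInter hreg hunc hC
  obtain ⟨τ, E, hE, hEsub⟩ := exists_diagInter_comp_subset_diagInter_diagInter hreg hunc T σ
  refine ⟨fun _ hξ => hξ.1, τ, D ∩ E, hD.inter hreg hunc hE, ?_⟩
  rintro ξ ⟨⟨hξD, hξE⟩, hξτ⟩
  obtain ⟨hξκ, hξσ⟩ := hEsub ⟨hξE, hξτ⟩
  exact ⟨hξκ, fun α hα => hsub α (hα.trans hξκ) ⟨(hDsub hξD).2 α hα, hξσ α hα⟩⟩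

theorem inter_mem_diagonalFilterSets (hreg : c.IsRegular) (hunc : ℵ₀ < c)
    {X Y : Set Ordinal.{u}} (hX : X ∈ diagonalFilterSets c.ord T)
    (hY : Y ∈ diagonalFilterSets c.ord T) : X ∩ Y ∈ diagonalFilterSets c.ord T := by
  classical
  have h2 : (2 : Ordinal.{u}) < c.ord :=
    mod_cast Ordinal.natCast_lt_of_isSuccLimit (isSuccLimit_ord hunc.le) 2
  obtain ⟨-, σ, C, hC, hsub⟩ := diagInter_mem_diagonalFilterSets T hreg hunc
    (f := fun α => if α = 0 then X else Y) fun α _ => by split_ifs <;> assumption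
  refine ⟨fun _ h => hX.1 h.1, σ, C ∩ {ξ | 2 ≤ ξ ∧ ξ < c.ord},
    hC.inter hreg hunc (isClubIn_tail h2), ?_⟩
  rintro ξ ⟨⟨hξC, h2ξ, -⟩, hξσ⟩
  have hξ := (hsub ⟨hξC, hξσ⟩).2
  exact ⟨by simpa using hξ 0 (zero_lt_two.trans_le h2ξ),
    by simpa using hξ 1 (one_lt_two.trans_le h2ξ)⟩

/-- Sets containing, on a club, the diagonal intersection of some `κ`-sequence from `T` form a
normal filter: re-indexing `κ × κ` by `κ` turns a diagonal intersection of diagonal intersections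
into a single one. It is proper as soon as all these diagonal intersections are stationary. -/
theorem exists_normalUniformFilter_of_isStationaryIn_diagInter (hreg : c.IsRegular)
    (hunc : ℵ₀ < c) (hT : ∀ s, T s ⊆ Iio c.ord)
    (hstat : ∀ σ : Ordinal.{u} → β, IsStationaryIn c.ord (diagInter c.ord (T ∘ σ))) :
    ∃ F : NormalUniformFilter c.ord, ∀ s, T s ∈ F.sets := by
  refine ⟨{ sets := diagonalFilterSets c.ord T
            sets_subset := fun X hX => hX.1
            univ_mem := isClubIn_Iio.mem_diagonalFilterSets T
            empty_not_mem := ?_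
            superset_mem := ?_
            inter_mem := fun X hX Y hY => inter_mem_diagonalFilterSets T hreg hunc hX hY
            uniform := fun α hα => (isClubIn_tail hα).mem_diagonalFilterSets T
            normal := fun f hf => diagInter_mem_diagonalFilterSets T hreg hunc hf }, fun s => ?_⟩
  · rintro ⟨-, σ, C, hC, hsub⟩
    obtain ⟨ξ, hξ⟩ := hstat σ C hC
    exact hsub ⟨hξ.2, hξ.1⟩
  · rintro X ⟨-, σ, C, hC, hsub⟩ Y hXY hY
    exact ⟨hY, σ, C, hC, hsub.trans hXY⟩
  · exact ⟨hT s, fun _ => s, _,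
      isClubIn_tail (Ordinal.one_lt_of_isSuccLimit (isSuccLimit_ord hunc.le)),
      fun ξ ⟨⟨h1ξ, _⟩, _, hξ⟩ => hξ 0 (zero_lt_one.trans_le h1ξ)⟩

end DiagonalFilter

section DiamondTree

/-- At `ξ`, `d ξ` is read as a `ξ`-sequence of pairs (branch, target), the `α`-th one coded by
the points `pair α (pair 0 θ)` (branch) and `pair α (pair 1 η)` (target); the label of `s` is the
target of any pair whose branch agrees with `s` below `ξ`. -/
def diamondTree (pair : Ordinal.{u} → Ordinal.{u} → Ordinal.{u}) (d : Ordinal.{u} → Set Ordinal.{u})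
    (ξ : Ordinal.{u}) (s : Ordinal.{u} → Bool) : Set Ordinal.{u} :=
  {η | η < ξ ∧ ∃ α < ξ, (∀ θ < ξ, pair α (pair 0 θ) ∈ d ξ ↔ s θ = true) ∧ pair α (pair 1 η) ∈ d ξ}

variable {c : Cardinal.{u}} {pair : Ordinal.{u} → Ordinal.{u} → Ordinal.{u}}
  {unpair : Ordinal.{u} → Ordinal.{u} × Ordinal.{u}} {d : Ordinal.{u} → Set Ordinal.{u}}

theorem diamondTree_congr {ξ : Ordinal.{u}} {s t : Ordinal.{u} → Bool}
    (h : ∀ η < ξ, s η = t η) : diamondTree pair d ξ s = diamondTree pair d ξ t :=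
  Set.ext fun η => and_congr_right fun _ => exists_congr fun _ =>
    and_congr_right fun _ => and_congr_left fun _ => forall₂_congr fun θ hθ => by rw [h θ hθ]

theorem diamondTree_eq_of_decode {ξ : Ordinal.{u}} {σ : Ordinal.{u} → Ordinal.{u} → Bool}
    {a : Ordinal.{u} → Set Ordinal.{u}}
    (hbranch : ∀ α < ξ, ∀ θ < ξ, pair α (pair 0 θ) ∈ d ξ ↔ σ α θ = true)
    (htarget : ∀ α < ξ, ∀ η < ξ, pair α (pair 1 η) ∈ d ξ ↔ η ∈ a α)
    (hsep : ∀ α < ξ, ∀ α' < ξ, (∀ θ < ξ, σ α' θ = σ α θ) → a α' = a α)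
    {α : Ordinal.{u}} (hα : α < ξ) : diamondTree pair d ξ (σ α) = a α ∩ Iio ξ := by
  ext η
  constructor
  · rintro ⟨hηξ, α', hα', hbr, hη⟩
    have hagree : ∀ θ < ξ, σ α' θ = σ α θ := fun θ hθ =>
      Bool.eq_iff_iff.2 ((hbranch α' hα' θ hθ).symm.trans (hbr θ hθ))
    exact ⟨hsep α hα α' hα' hagree ▸ (htarget α' hα' η hηξ).1 hη, hηξ⟩
  · rintro ⟨hη, hηξ⟩
    exact ⟨hηξ, α, hα, hbranch α hα, (htarget α hα η hηξ).2 hη⟩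

theorem exists_code {κ : Ordinal.{u}} (h1 : 1 < κ)
    (hpair : ∀ α < κ, ∀ β < κ, pair α β < κ ∧ unpair (pair α β) = (α, β))
    (σ : Ordinal.{u} → Ordinal.{u} → Bool) (b : Ordinal.{u} → Set Ordinal.{u}) :
    ∃ A ⊆ Iio κ, ∀ α < κ, ∀ θ < κ, (pair α (pair 0 θ) ∈ A ↔ σ α θ = true) ∧
      (pair α (pair 1 θ) ∈ A ↔ θ ∈ b α) := by
  refine ⟨{γ | γ < κ ∧
    ((unpair (unpair γ).2).1 = 0 ∧ σ (unpair γ).1 (unpair (unpair γ).2).2 = true ∨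
      (unpair (unpair γ).2).1 = 1 ∧ (unpair (unpair γ).2).2 ∈ b (unpair γ).1)},
    fun _ hγ => hγ.1, fun α hα θ hθ => ?_⟩
  obtain ⟨h0θ, e0⟩ := hpair 0 (zero_lt_one.trans h1) θ hθ
  obtain ⟨h1θ, e1⟩ := hpair 1 h1 θ hθ
  obtain ⟨hα0, eα0⟩ := hpair α hα _ h0θ
  obtain ⟨hα1, eα1⟩ := hpair α hα _ h1θ
  simp [hα0, hα1, eα0, eα1, e0, e1]

/-- `w α α'` is a point below `κ` at which `σ α` and `σ α'` differ, if there is one. -/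
theorem exists_separating_points {κ : Ordinal.{u}} (hκ : 0 < κ)
    (σ : Ordinal.{u} → Ordinal.{u} → Bool) :
    ∃ w : Ordinal.{u} → Ordinal.{u} → Ordinal.{u}, ∀ α α', w α α' < κ ∧
      (σ α (w α α') = σ α' (w α α') → ∀ θ < κ, σ α θ = σ α' θ) := by
  choose w hw using fun α α' => show ∃ η, η < κ ∧ (σ α η = σ α' η → ∀ θ < κ,
      σ α θ = σ α' θ) by
    by_cases h : ∀ θ < κ, σ α θ = σ α' θ
    · exact ⟨0, hκ, fun _ => h⟩
    · push Not at h
      obtain ⟨η, hη, hne⟩ := h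
      exact ⟨η, hη, fun heq => absurd heq hne⟩
  exact ⟨w, hw⟩

theorem isStationaryIn_diagInter_guessSet_diamondTree (hreg : c.IsRegular) (hunc : ℵ₀ < c)
    (hpair : ∀ α < c.ord, ∀ β < c.ord, pair α β < c.ord ∧ unpair (pair α β) = (α, β))
    (hd : ∀ a ⊆ Iio c.ord, IsStationaryIn c.ord (guessSet c.ord d a))
    {a : (Ordinal.{u} → Bool) → Set Ordinal.{u}}
    (ha : ∀ s t : Ordinal.{u} → Bool, (∀ η < c.ord, s η = t η) → a s = a t)
    (σ : Ordinal.{u} → Ordinal.{u} → Bool) :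
    IsStationaryIn c.ord (diagInter c.ord fun α =>
      guessSet c.ord (fun ξ => diamondTree pair d ξ (σ α)) (a (σ α))) := by
  intro C hC
  have h1 : (1 : Ordinal.{u}) < c.ord := Ordinal.one_lt_of_isSuccLimit (isSuccLimit_ord hunc.le)
  have h0 : (0 : Ordinal.{u}) < c.ord := zero_lt_one.trans h1
  -- the whole sequence `⟨(σ α, a (σ α)) : α < κ⟩`, coded as one subset of `κ`
  obtain ⟨A, hAκ, hA⟩ := exists_code h1 hpair σ fun α => a (σ α)
  obtain ⟨w, hw⟩ := exists_separating_points h0 σ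
  set g : Ordinal.{u} → Ordinal.{u} → Ordinal.{u} := fun α η =>
    max (pair α (pair 0 η)) (max (pair α (pair 1 η)) (w α η))
  have hg : ∀ α < c.ord, ∀ η < c.ord, g α η < c.ord := fun α hα η hη =>
    max_lt (hpair α hα _ (hpair 0 h0 η hη).1).1
      (max_lt (hpair α hα _ (hpair 1 h1 η hη).1).1 (hw α η).1)
  obtain ⟨ξ, ⟨hξκ, hdξ⟩, hξC, -, -, hcl⟩ := hd A hAκ _
    (hC.inter hreg hunc (isClubIn_closurePoints hreg hunc hg))
  -- at a closure point of `g`, reading `d ξ = A ∩ ξ` recovers the sequence below `ξ`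
  have hread : ∀ γ < ξ, γ ∈ d ξ ↔ γ ∈ A := fun γ hγ => by simp [hdξ, hγ]
  refine ⟨ξ, ⟨hξκ, fun α hα =>
    ⟨hξκ, diamondTree_eq_of_decode (a := fun α => a (σ α)) ?_ ?_ ?_ hα⟩⟩, hξC⟩
  · intro α' hα' θ hθ
    exact (hread _ ((le_max_left _ _).trans_lt (hcl α' hα' θ hθ))).trans
      (hA α' (hα'.trans hξκ) θ (hθ.trans hξκ)).1
  · intro α' hα' η hη
    exact (hread _ ((le_max_left _ _).trans_lt ((le_max_right _ _).trans_lt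
      (hcl α' hα' η hη)))).trans (hA α' (hα'.trans hξκ) η (hη.trans hξκ)).2
  · intro α hα α' hα' hagree
    exact ha _ _ ((hw α' α).2 (hagree _ ((le_max_right _ _).trans_lt
      ((le_max_right _ _).trans_lt (hcl α' hα' α hα)))))

theorem isDiamondTree_diamondTree (hreg : c.IsRegular) (hunc : ℵ₀ < c)
    (hpair : ∀ α < c.ord, ∀ β < c.ord, pair α β < c.ord ∧ unpair (pair α β) = (α, β))
    (hd : ∀ a ⊆ Iio c.ord, IsStationaryIn c.ord (guessSet c.ord d a)) :
    IsDiamondTree c.ord (diamondTree pair d) :=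
  ⟨fun _ hξ _ _ hη => hη.1.trans hξ, fun _ _ _ _ h => diamondTree_congr h, fun a _ ha =>
    exists_normalUniformFilter_of_isStationaryIn_diagInter
      (fun s => guessSet c.ord (fun ξ => diamondTree pair d ξ s) (a s)) hreg hunc
      (fun _ _ hξ => hξ.1) (isStationaryIn_diagInter_guessSet_diamondTree hreg hunc hpair hd ha)⟩

end DiamondTree

section JointGuess

variable {κ : Ordinal.{u}} {d : Ordinal.{u} → Ordinal.{u} → Set Ordinal.{u}}

theorem JointGuess.mono {I J : Set Ordinal.{u}} (hIJ : I ⊆ J) (h : JointGuess κ J d) :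
    JointGuess κ I d := by
  classical
  intro a ha
  obtain ⟨F, hF⟩ := h (fun β => if β ∈ I then a β else ∅) fun β _ => by
    split_ifs with hβ
    exacts [ha β hβ, empty_subset _]
  exact ⟨F, fun β hβ => by simpa [hβ] using hF β (hIJ hβ)⟩

theorem JointGuess.isStationaryIn (hκ : IsSuccLimit κ) {I : Set Ordinal.{u}}
    (h : JointGuess κ I d) {β : Ordinal.{u}} (hβ : β ∈ I) {a : Set Ordinal.{u}}
    (ha : a ⊆ Iio κ) : IsStationaryIn κ (guessSet κ (d β) a) := by
  obtain ⟨F, hF⟩ := h (fun _ => a) fun _ _ => ha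
  exact F.isStationaryIn_of_mem hκ (hF β hβ)

theorem IsDiamondTree.jointGuess {D : Ordinal.{u} → (Ordinal.{u} → Bool) → Set Ordinal.{u}}
    (hD : IsDiamondTree κ D) {I : Set Ordinal.{u}} {s : Ordinal.{u} → Ordinal.{u} → Bool}
    {index : (Ordinal.{u} → Bool) → Ordinal.{u}}
    (hindex : ∀ t t' : Ordinal.{u} → Bool, (∀ η < κ, t η = t' η) → index t = index t')
    (hs : ∀ β ∈ I, index (s β) = β) :
    JointGuess κ I fun β ξ => D ξ (s β) ∩ Iio ξ := by
  intro a ha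
  obtain ⟨F, hF⟩ := hD.2.2 (fun t => a (index t) ∩ Iio κ) (fun _ => inter_subset_right)
    fun t t' h => by rw [hindex t t' h]
  refine ⟨F, fun β hβ => F.superset_mem _ (hF (s β)) _ ?_ fun _ hξ => hξ.1⟩
  rintro ξ ⟨hξκ, hξ⟩
  refine ⟨hξκ, show D ξ (s β) ∩ Iio ξ = a β ∩ Iio ξ from ?_⟩
  rw [hξ, hs β hβ, inter_eq_left.2 (ha β hβ), inter_assoc, inter_self]

end JointGuess

theorem exists_branch_index (c : Cardinal.{u}) :
    ∃ (s : Ordinal.{u} → Ordinal.{u} → Bool) (index : (Ordinal.{u} → Bool) → Ordinal.{u}),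
      (∀ t t' : Ordinal.{u} → Bool, (∀ η < c.ord, t η = t' η) → index t = index t') ∧
        ∀ β < ((2 : Cardinal.{u}) ^ c).ord, index (s β) = β := by
  obtain ⟨e⟩ : Nonempty (Iio ((2 : Cardinal.{u}) ^ c).ord ≃ (Iio c.ord → Bool)) :=
    Cardinal.eq.1 <| by
      rw [Cardinal.mk_Iio_ordinal, Cardinal.mk_arrow, Cardinal.mk_Iio_ordinal, Cardinal.mk_bool,
        card_ord, card_ord, Cardinal.lift_two, Cardinal.lift_uzero, Cardinal.lift_power,
        Cardinal.lift_two]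
  refine ⟨fun β η => if h : β < ((2 : Cardinal.{u}) ^ c).ord ∧ η < c.ord then
      e ⟨β, h.1⟩ ⟨η, h.2⟩ else false, fun t => e.symm fun η => t η,
    fun t t' h => by simp only [funext fun η : Iio c.ord => h η η.2], fun β hβ => ?_⟩
  have : (fun η : Iio c.ord => if h : β < ((2 : Cardinal.{u}) ^ c).ord ∧ (η : Ordinal) < c.ord then
      e ⟨β, h.1⟩ ⟨η, h.2⟩ else false) = e ⟨β, hβ⟩ := funext fun η => dif_pos ⟨hβ, η.2⟩
  simp only [this, Equiv.symm_apply_apply]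

/-- For a regular uncountable cardinal `κ` the following are equivalent:
(1) there is a `◊_κ`-sequence, i.e. a `κ`-list all of whose guessing sets are
stationary; (2) there is a `jd_{κ,κ}`-sequence; (3) there is a
`jd_{κ,2^κ}`-sequence; (4) there is a `◊_κ`-tree. -/
theorem stmt6 (c : Cardinal) (hreg : c.IsRegular) (hunc : Cardinal.aleph0 < c) :
    List.TFAE
      [ ∃ d : Ordinal → Set Ordinal, IsKappaList c.ord d ∧
          ∀ a ⊆ Set.Iio c.ord, IsStationaryIn c.ord (guessSet c.ord d a),
        ∃ d : Ordinal → Ordinal → Set Ordinal,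
          (∀ β < c.ord, IsKappaList c.ord (d β)) ∧
            JointGuess c.ord (Set.Iio c.ord) d,
        ∃ d : Ordinal → Ordinal → Set Ordinal,
          (∀ β < ((2 : Cardinal) ^ c).ord, IsKappaList c.ord (d β)) ∧
            JointGuess c.ord (Set.Iio ((2 : Cardinal) ^ c).ord) d,
        ∃ D : Ordinal → (Ordinal → Bool) → Set Ordinal, IsDiamondTree c.ord D ] := by
  have hlim : IsSuccLimit c.ord := isSuccLimit_ord hunc.le
  have hle : c.ord ≤ ((2 : Cardinal) ^ c).ord := ord_le_ord.2 (cantor c).le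
  tfae_have 1 → 4 := fun ⟨_, _, hd⟩ =>
    let ⟨_, _, hpair⟩ := exists_pairing hunc
    ⟨_, isDiamondTree_diamondTree hreg hunc hpair hd⟩
  tfae_have 4 → 3 := fun ⟨_, hD⟩ =>
    let ⟨_, _, hindex, hs⟩ := exists_branch_index c
    ⟨_, fun _ _ _ _ => inter_subset_right, hD.jointGuess hindex hs⟩
  tfae_have 3 → 2 := fun ⟨d, hd, hjoint⟩ =>
    ⟨d, fun β hβ => hd β (hβ.trans_le hle), hjoint.mono (Iio_subset_Iio hle)⟩
  tfae_have 2 → 1 := fun ⟨d, hd, hjoint⟩ =>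
    ⟨d 0, hd 0 hlim.bot_lt, fun _ ha => hjoint.isStationaryIn hlim hlim.bot_lt ha⟩
  tfae_finish
end

section
/- Let κ be an infinite cardinal and let Q be an infinite elementary substructure, in the first-order language of partial orders, of the Cohen poset Add(ω,κ) of finite partial functions from κ to 2 ordered by reverse inclusion. Then Q consists exactly of those conditions that are meets (unions, as partial functions) of finite sets of pairwise compatible coatoms of Add(ω,κ) that belong to Q; consequently Q is order-isomorphic to Add(ω,μ), where μ is the cardinality of the set of coatoms of Add(ω,κ) belonging to Q, and μ = |Q|. -/
/-- The Cohen poset of finite partial functions from `X` to `2`, ordered by reverse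
inclusion. A condition is (the graph of) a finite partial function, coded as a finite
set of pairs `(x, b)` containing at most one pair for each `x`. -/
def CohenPoset (X : Type) : Type :=
  {s : Finset (X × Bool) // ∀ x b₁ b₂, (x, b₁) ∈ s → (x, b₂) ∈ s → b₁ = b₂}

instance (X : Type) : PartialOrder (CohenPoset X) where
  le p q := q.1 ⊆ p.1
  le_refl p := Finset.Subset.refl _
  le_trans p q r hpq hqr := Finset.Subset.trans hqr hpq
  le_antisymm p q h₁ h₂ := Subtype.ext (Finset.Subset.antisymm h₂ h₁)

/-- A subset `D` of a poset is dense if every condition has a lower bound in `D`. -/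
def IsDenseIn {P : Type*} [LE P] (D : Set P) : Prop :=
  ∀ p : P, ∃ q ∈ D, q ≤ p

/-- A filter on a poset: a nonempty, upward closed, downward directed set. -/
def IsPosetFilter {P : Type*} [LE P] (G : Set P) : Prop :=
  G.Nonempty ∧ (∀ p ∈ G, ∀ q, p ≤ q → q ∈ G) ∧
    ∀ p ∈ G, ∀ q ∈ G, ∃ r ∈ G, r ≤ p ∧ r ≤ q

instance (X : Type) : OrderTop (CohenPoset X) where
  top := ⟨∅, by intro x b₁ b₂ h₁ h₂; exact absurd h₁ (Finset.notMem_empty _)⟩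
  le_top p := Finset.empty_subset _

/-- View the Cohen poset as a structure in the first-order language of orders. -/
noncomputable instance (X : Type) : FirstOrder.Language.order.Structure (CohenPoset X) :=
  FirstOrder.Language.orderStructure _

/-!
Order-theoretic notions with parameters in `Q` (the top element, binary meets, coatoms, the
condition obtained from `p` by deleting one of its bits, and the unique coatom incompatible
with a given one) are first-order definable, so `Q` is closed under them. Peeling off
coatoms of `Q` one at a time shows that a condition lies in `Q` iff all its single-bit
restrictions do, and that `single x b ∈ Q` iff `single x (!b) ∈ Q`. Hence `Q` is the image
of `Add(ω, C)` for the set `C` of coordinates `x` with `single x true ∈ Q`, and both `Q` and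
its set of coatoms (in bijection with `C × 2`) have cardinality `|C|`.
-/

open FirstOrder FirstOrder.Language Cardinal

theorem Cardinal.mk_prod_bool (A : Type) [Infinite A] : #(A × Bool) = #A := by
  rw [mk_prod, mk_bool, lift_id, lift_ofNat]
  exact mul_eq_left (aleph0_le_mk A) (ofNat_lt_aleph0.le.trans (aleph0_le_mk A)) two_ne_zero

namespace FirstOrder.Language.order

variable {M : Type*} [Language.order.Structure M] {α : Type*}

abbrev param {n : ℕ} (i : α) : Language.order.Term (α ⊕ Fin n) := Term.var (Sum.inl i)

def isTopFormula : Language.order.BoundedFormula α 1 :=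
  ∀' (&1).le &0

def isGLBFormula : Language.order.BoundedFormula (Fin 2) 1 :=
  (&0).le (param 0) ⊓ (&0).le (param 1) ⊓
    ∀' (((&1).le (param 0) ⊓ (&1).le (param 1)) ⟹ (&1).le &0)

-- In `CohenPoset X`, with parameters `p` and `single x b` for `(x, b) ∈ p`, the only
-- realization is `p.erase (x, b)`.
def differenceFormula : Language.order.BoundedFormula (Fin 2) 1 :=
  (param 0).le &0 ⊓ ∼((&0).le (param 1)) ⊓
    ∀' (((&1).le &0 ⊓ (&1).le (param 1)) ⟹ (&1).le (param 0))

def compatibleFormula : Language.order.BoundedFormula (Fin 1) 1 :=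
  ∃' ((&1).le (param 0) ⊓ (&1).le &0)

def isCoatomFormula : Language.order.BoundedFormula α 1 :=
  ∼isTopFormula ⊓ ∀' ((&0).lt &1 ⟹ ∀' (&2).le &1)

section

variable [LE M] [Language.order.OrderedStructure M] {v : α → M} {a : M}

@[simp] theorem realize_isTopFormula : isTopFormula.Realize v (fun _ => a) ↔ IsTop a := by
  simp [isTopFormula, IsTop, Fin.snoc]

@[simp] theorem realize_compatibleFormula {v : Fin 1 → M} :
    compatibleFormula.Realize v (fun _ => a) ↔ ∃ t, t ≤ v 0 ∧ t ≤ a := by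
  simp [compatibleFormula, Fin.snoc]

end

variable [PartialOrder M] [Language.order.OrderedStructure M] {a : M}

@[simp] theorem realize_isGLBFormula {v : Fin 2 → M} :
    isGLBFormula.Realize v (fun _ => a) ↔ IsGLB {v 0, v 1} a := by
  simp [isGLBFormula, IsGLB, IsGreatest, lowerBounds, upperBounds, Fin.snoc]

@[simp] theorem realize_differenceFormula {v : Fin 2 → M} :
    differenceFormula.Realize v (fun _ => a) ↔
      v 0 ≤ a ∧ ¬a ≤ v 1 ∧ ∀ t, t ≤ a → t ≤ v 1 → t ≤ v 0 := by
  simp [differenceFormula, Fin.snoc, and_assoc]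

@[simp] theorem realize_isCoatomFormula [OrderTop M] {v : α → M} :
    isCoatomFormula.Realize v (fun _ => a) ↔ IsCoatom a := by
  simp [isCoatomFormula, Fin.snoc, IsCoatom, ← isTop_iff_eq_top, IsTop]

end FirstOrder.Language.order

namespace FirstOrder.Language.ElementarySubstructure

section

variable {L : Language} {M : Type*} [L.Structure M] (S : L.ElementarySubstructure M)
  {α : Type*} (φ : L.BoundedFormula α 1) {v : α → M}

theorem exists_mem_realize_of_realize (hv : ∀ i, v i ∈ S) {a : M}
    (ha : φ.Realize v (fun _ => a)) : ∃ b ∈ S, φ.Realize v (fun _ => b) := by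
  have hM : φ.ex.Realize v default := BoundedFormula.realize_ex.2 ⟨a, by
    convert ha using 2; simp [Fin.snoc]⟩
  have hS : Formula.Realize φ.ex (fun i => (⟨v i, hv i⟩ : S)) := by
    rw [← S.subtype.map_formula]; exact hM
  obtain ⟨b, hb⟩ := BoundedFormula.realize_ex.1 hS
  refine ⟨b, b.2, ?_⟩
  rw [← S.subtype.map_boundedFormula] at hb
  convert hb using 2
  · rfl
  · simp [Fin.snoc]

theorem mem_of_realize_iff_eq (hv : ∀ i, v i ∈ S) {a : M}
    (h : ∀ b, φ.Realize v (fun _ => b) ↔ b = a) : a ∈ S := by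
  obtain ⟨b, hb, hφ⟩ := S.exists_mem_realize_of_realize φ hv ((h a).2 rfl)
  rwa [← (h b).1 hφ]

end

section Order

open FirstOrder.Language.order

variable {M : Type*} [PartialOrder M] [Language.order.Structure M]
  [Language.order.OrderedStructure M] (S : Language.order.ElementarySubstructure M)

theorem mem_of_isTop {a : M} (ha : IsTop a) : a ∈ S :=
  S.mem_of_realize_iff_eq isTopFormula (v := finZeroElim) finZeroElim fun _ =>
    realize_isTopFormula.trans ⟨fun hb => le_antisymm (ha _) (hb _), fun hb => hb ▸ ha⟩

theorem mem_of_isGLB {p q r : M} (hp : p ∈ S) (hq : q ∈ S) (hr : IsGLB {p, q} r) : r ∈ S :=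
  S.mem_of_realize_iff_eq isGLBFormula (v := ![p, q]) (Fin.forall_fin_two.2 ⟨hp, hq⟩) fun _ =>
    realize_isGLBFormula.trans ⟨fun hb => hb.unique hr, fun hb => hb ▸ hr⟩

end Order

end FirstOrder.Language.ElementarySubstructure

namespace CohenPoset

variable {X : Type}

instance : Language.order.OrderedStructure (CohenPoset X) := ⟨fun _ => Iff.rfl⟩

@[ext] theorem ext {p q : CohenPoset X} (h : ∀ a, a ∈ p.1 ↔ a ∈ q.1) : p = q :=
  Subtype.ext (Finset.ext h)

theorem le_iff {p q : CohenPoset X} : p ≤ q ↔ q.1 ⊆ p.1 := Iff.rfl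

theorem lt_iff {p q : CohenPoset X} : p < q ↔ q.1 ⊂ p.1 :=
  lt_iff_le_not_ge.trans Finset.ssubset_def.symm

theorem val_top : (⊤ : CohenPoset X).1 = ∅ := rfl

theorem val_eq_empty_iff {p : CohenPoset X} : p.1 = ∅ ↔ p = ⊤ :=
  ⟨fun h => Subtype.ext h, fun h => h ▸ val_top⟩

def single (x : X) (b : Bool) : CohenPoset X :=
  ⟨{(x, b)}, by simp_all⟩

@[simp] theorem val_single (x : X) (b : Bool) : (single x b).1 = {(x, b)} := rfl

theorem le_single_iff {p : CohenPoset X} {x : X} {b : Bool} :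
    p ≤ single x b ↔ (x, b) ∈ p.1 :=
  Finset.singleton_subset_iff

theorem single_inj {x y : X} {b d : Bool} : single x b = single y d ↔ x = y ∧ b = d := by
  refine ⟨fun h => ?_, fun ⟨hxy, hbd⟩ => hxy ▸ hbd ▸ rfl⟩
  simpa using congrArg Subtype.val h

theorem single_ne_top (x : X) (b : Bool) : single x b ≠ ⊤ := by
  simp [← val_eq_empty_iff]

theorem isCoatom_single (x : X) (b : Bool) : IsCoatom (single x b) := by
  refine ⟨single_ne_top x b, fun t ht => ?_⟩
  rw [lt_iff, val_single, Finset.ssubset_singleton_iff] at ht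
  exact val_eq_empty_iff.1 ht

theorem isCoatom_iff {c : CohenPoset X} : IsCoatom c ↔ ∃ x b, c = single x b := by
  refine ⟨fun hc => ?_, fun ⟨x, b, hc⟩ => hc ▸ isCoatom_single x b⟩
  obtain ⟨⟨x, b⟩, hxb⟩ := Finset.nonempty_iff_ne_empty.2 (mt val_eq_empty_iff.1 hc.1)
  exact ⟨x, b, ((hc.le_iff.1 (le_single_iff.2 hxb)).resolve_left (single_ne_top x b)).symm⟩

def Compatible (p q : CohenPoset X) : Prop :=
  ∀ x b₁ b₂, (x, b₁) ∈ p.1 → (x, b₂) ∈ q.1 → b₁ = b₂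

theorem compatible_single_single_iff {x y : X} {b d : Bool} :
    Compatible (single x b) (single y d) ↔ (x = y → b = d) := by
  refine ⟨fun h hxy => h x b d (by simp) (by simp [hxy]), fun h z b₁ b₂ h₁ h₂ => ?_⟩
  simp only [val_single, Finset.mem_singleton, Prod.mk.injEq] at h₁ h₂
  exact h₁.2.trans ((h (h₁.1.symm.trans h₂.1)).trans h₂.2.symm)

section

variable [DecidableEq X]

def union (p q : CohenPoset X) (h : Compatible p q) : CohenPoset X :=
  ⟨p.1 ∪ q.1, by
    intro x b₁ b₂ h₁ h₂
    rcases Finset.mem_union.1 h₁ with h₁ | h₁ <;> rcases Finset.mem_union.1 h₂ with h₂ | h₂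
    · exact p.2 x b₁ b₂ h₁ h₂
    · exact h x b₁ b₂ h₁ h₂
    · exact (h x b₂ b₁ h₂ h₁).symm
    · exact q.2 x b₁ b₂ h₁ h₂⟩

theorem isGLB_union {p q : CohenPoset X} (h : Compatible p q) : IsGLB {p, q} (union p q h) := by
  simp only [IsGLB, IsGreatest, lowerBounds_insert, lowerBounds_singleton, upperBounds,
    Set.mem_inter_iff, Set.mem_Iic, le_iff, union]
  exact ⟨⟨Finset.subset_union_left, Finset.subset_union_right⟩,
    fun t ⟨hp, hq⟩ => Finset.union_subset hp hq⟩

theorem compatible_iff_exists_le {p q : CohenPoset X} :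
    Compatible p q ↔ ∃ t, t ≤ p ∧ t ≤ q :=
  ⟨fun h => ⟨union p q h, (isGLB_union h).1 (by simp), (isGLB_union h).1 (by simp)⟩,
    fun ⟨t, hp, hq⟩ x _ _ h₁ h₂ => t.2 x _ _ (hp h₁) (hq h₂)⟩

def erase (p : CohenPoset X) (a : X × Bool) : CohenPoset X :=
  ⟨p.1.erase a, fun x _ _ h₁ h₂ => p.2 x _ _ (Finset.mem_of_mem_erase h₁)
    (Finset.mem_of_mem_erase h₂)⟩

@[simp] theorem val_erase (p : CohenPoset X) (a : X × Bool) : (p.erase a).1 = p.1.erase a := rfl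

theorem isGLB_erase_single {p : CohenPoset X} {x : X} {b : Bool} (hxb : (x, b) ∈ p.1) :
    IsGLB {p.erase (x, b), single x b} p := by
  refine ⟨?_, fun t ht => ?_⟩
  · rintro q (rfl | rfl)
    · exact Finset.erase_subset _ _
    · exact le_single_iff.2 hxb
  · have hxt : (x, b) ∈ t.1 := le_single_iff.1 (ht (Set.mem_insert_of_mem _ rfl))
    exact (Finset.erase_subset_iff_of_mem hxt).1 (ht (Set.mem_insert _ _))

end

section Map

variable {A B : Type}

def map (f : A ↪ B) : CohenPoset A ↪o CohenPoset B :=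
  OrderEmbedding.ofMapLEIff
    (fun p => ⟨p.1.map (f.prodMap (.refl Bool)), by
      simp only [Finset.mem_map, Function.Embedding.coe_prodMap, Prod.exists, Prod.map,
        Function.Embedding.refl_apply, Prod.mk.injEq]
      rintro _ _ _ ⟨a₁, _, h₁, rfl, rfl⟩ ⟨a₂, _, h₂, ha, rfl⟩
      exact p.2 a₁ _ _ h₁ (f.injective ha ▸ h₂)⟩)
    fun _ _ => Finset.map_subset_map

@[simp] theorem val_map (f : A ↪ B) (p : CohenPoset A) :
    (map f p).1 = p.1.map (f.prodMap (.refl Bool)) := rfl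

theorem mem_range_map_iff {f : A ↪ B} {p : CohenPoset B} :
    p ∈ Set.range (map f) ↔ ∀ a ∈ p.1, a.1 ∈ Set.range f := by
  classical
  constructor
  · rintro ⟨q, rfl⟩ a ha
    obtain ⟨c, -, rfl⟩ := Finset.mem_map.1 ha
    exact ⟨c.1, rfl⟩
  · intro h
    let g : A × Bool → B × Bool := f.prodMap (.refl Bool)
    have hg : Set.InjOn g (g ⁻¹' p.1) := (f.prodMap (.refl Bool)).injective.injOn
    obtain ⟨q, hq⟩ : ∃ q : CohenPoset A, q.1 = p.1.preimage g hg :=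
      ⟨⟨p.1.preimage g hg, fun a b₁ b₂ h₁ h₂ => p.2 (f a) b₁ b₂
        (Finset.mem_preimage.1 h₁ : g (a, b₁) ∈ p.1)
        (Finset.mem_preimage.1 h₂ : g (a, b₂) ∈ p.1)⟩, rfl⟩
    refine ⟨q, ext fun a => ?_⟩
    rw [val_map, hq, Finset.mem_map]
    refine ⟨fun ⟨c, hc, hca⟩ => hca ▸ (Finset.mem_preimage.1 hc : g c ∈ p.1), fun ha => ?_⟩
    obtain ⟨c, hc⟩ := h a ha
    exact ⟨(c, a.2), Finset.mem_preimage.2 (by simpa [g, hc] using ha), by simp [hc]⟩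

noncomputable def congr (e : A ≃ B) : CohenPoset A ≃o CohenPoset B :=
  OrderIso.ofSurjective (map e.toEmbedding) fun _ =>
    mem_range_map_iff.2 fun a _ => e.surjective a.1

end Map

instance [Finite X] : Finite (CohenPoset X) :=
  Finite.of_injective _ Subtype.val_injective

theorem single_injective (b : Bool) : Function.Injective (single · b : X → _) :=
  fun _ _ h => (single_inj.1 h).1

theorem infinite_iff : Infinite (CohenPoset X) ↔ Infinite X :=
  ⟨fun _ => (finite_or_infinite X).resolve_left fun _ => not_finite (CohenPoset X),
    fun _ => Infinite.of_injective _ (single_injective true)⟩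

theorem mk_eq_of_infinite [Infinite X] : #(CohenPoset X) = #X :=
  le_antisymm
    ((mk_le_of_injective Subtype.val_injective).trans_eq <| by
      rw [mk_finset_of_infinite, mk_prod_bool])
    (mk_le_of_injective (single_injective true))

open FirstOrder.Language.order

variable (S : Language.order.ElementarySubstructure (CohenPoset X))

def coords : Set X := {x | single x true ∈ S}

theorem exists_single_mem_of_mem {p : CohenPoset X} (hp : p ∈ S) (hne : p ≠ ⊤) :
    ∃ x b, (x, b) ∈ p.1 ∧ single x b ∈ S := by
  obtain ⟨⟨x, b⟩, hxb⟩ := Finset.nonempty_iff_ne_empty.2 (mt val_eq_empty_iff.1 hne)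
  obtain ⟨c, hcS, hc⟩ := S.exists_mem_realize_of_realize ((param 0).le &0 ⊓ isCoatomFormula)
    (v := ![p]) (Fin.forall_fin_one.2 hp) (a := single x b)
    (by simp [le_single_iff.2 hxb, isCoatom_single])
  rw [BoundedFormula.realize_inf, realize_isCoatomFormula, isCoatom_iff] at hc
  obtain ⟨hpc, y, d, rfl⟩ := hc
  simp only [Term.realize_le] at hpc
  exact ⟨y, d, le_single_iff.1 hpc, hcS⟩

variable [DecidableEq X]

theorem erase_mem {p : CohenPoset X} {x : X} {b : Bool} (hp : p ∈ S) (hxb : (x, b) ∈ p.1)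
    (hs : single x b ∈ S) : p.erase (x, b) ∈ S := by
  refine S.mem_of_realize_iff_eq differenceFormula (v := ![p, single x b])
    (Fin.forall_fin_two.2 ⟨hp, hs⟩) fun r => ?_
  simp only [realize_differenceFormula, Matrix.cons_val_zero, Matrix.cons_val_one,
    le_single_iff]
  constructor
  · rintro ⟨hpr, hxr, hglb⟩
    have hc : Compatible r (single x b) := compatible_iff_exists_le.2 ⟨p, hpr, le_single_iff.2 hxb⟩
    have hu : union r (single x b) hc ≤ p :=
      hglb _ ((isGLB_union hc).1 (by simp)) (le_single_iff.1 ((isGLB_union hc).1 (by simp)))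
    ext y
    simp only [val_erase, Finset.mem_erase]
    refine ⟨fun hy => ⟨ne_of_mem_of_not_mem hy hxr, hpr hy⟩, fun ⟨hne, hy⟩ => ?_⟩
    simpa [union, hne] using hu hy
  · rintro rfl
    exact ⟨Finset.erase_subset _ _, Finset.notMem_erase _ _,
      fun t ht hxt => (isGLB_erase_single hxb).2 (by simp [ht, le_single_iff.2 hxt])⟩

theorem single_bnot_mem {x : X} {b : Bool} (hs : single x b ∈ S) : single x (!b) ∈ S := by
  refine S.mem_of_realize_iff_eq (isCoatomFormula ⊓ ∼compatibleFormula)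
    (v := ![single x b]) (Fin.forall_fin_one.2 hs) fun c => ?_
  simp only [BoundedFormula.realize_inf, BoundedFormula.realize_not, realize_isCoatomFormula,
    realize_compatibleFormula, Matrix.cons_val_zero, ← compatible_iff_exists_le, isCoatom_iff]
  constructor
  · rintro ⟨⟨y, d, rfl⟩, hinc⟩
    obtain ⟨rfl, hbd⟩ := Classical.not_imp.1 (mt compatible_single_single_iff.2 hinc)
    exact single_inj.2 ⟨rfl, Bool.eq_not_iff.2 (Ne.symm hbd)⟩
  · rintro rfl
    exact ⟨⟨x, !b, rfl⟩, by simp [compatible_single_single_iff]⟩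

theorem single_mem_of_mem {p : CohenPoset X} (hp : p ∈ S) {x : X} {b : Bool}
    (hxb : (x, b) ∈ p.1) : single x b ∈ S := by
  obtain ⟨y, d, hyd, hs⟩ := exists_single_mem_of_mem S hp (by rintro rfl; simp [val_top] at hxb)
  by_cases h : (x, b) = (y, d)
  · obtain ⟨rfl, rfl⟩ := Prod.mk.inj h
    exact hs
  · exact single_mem_of_mem (erase_mem S hp hyd hs) (Finset.mem_erase.2 ⟨h, hxb⟩)
termination_by p.1.card
decreasing_by exact Finset.card_erase_lt_of_mem hyd

theorem mem_of_forall_single_mem {p : CohenPoset X}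
    (h : ∀ x b, (x, b) ∈ p.1 → single x b ∈ S) : p ∈ S := by
  obtain hp | ⟨⟨x, b⟩, hxb⟩ := p.1.eq_empty_or_nonempty
  · exact val_eq_empty_iff.1 hp ▸ S.mem_of_isTop isTop_top
  · have herase : p.erase (x, b) ∈ S :=
      mem_of_forall_single_mem fun y d hyd => h y d (Finset.mem_of_mem_erase hyd)
    exact S.mem_of_isGLB herase (h x b hxb) (isGLB_erase_single hxb)
termination_by p.1.card
decreasing_by exact Finset.card_erase_lt_of_mem hxb

theorem mem_iff_forall_single_mem {p : CohenPoset X} :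
    p ∈ S ↔ ∀ x b, (x, b) ∈ p.1 → single x b ∈ S :=
  ⟨fun hp _ _ => single_mem_of_mem S hp, mem_of_forall_single_mem S⟩

theorem mem_iff_exists_finset_coatom (p : CohenPoset X) :
    p ∈ S ↔ ∃ s : Finset (CohenPoset X),
      (∀ q ∈ s, IsCoatom q ∧ q ∈ S) ∧
      (∀ q ∈ s, ∀ r ∈ s, ∃ t : CohenPoset X, t ≤ q ∧ t ≤ r) ∧
      (∀ a, a ∈ p.1 ↔ ∃ q ∈ s, a ∈ q.1) := by
  classical
  rw [mem_iff_forall_single_mem]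
  constructor
  · intro h
    refine ⟨p.1.image fun a => single a.1 a.2, ?_, ?_, fun a => ?_⟩
    · simp only [Finset.mem_image, forall_exists_index, and_imp, forall_apply_eq_imp_iff₂]
      exact fun a ha => ⟨isCoatom_single _ _, h _ _ ha⟩
    · simp only [Finset.mem_image, forall_exists_index, and_imp, forall_apply_eq_imp_iff₂]
      exact fun a ha c hc => ⟨p, le_single_iff.2 ha, le_single_iff.2 hc⟩
    · simp only [Finset.mem_image, exists_exists_and_eq_and, val_single, Prod.mk.eta,
        Finset.mem_singleton, exists_eq_right']
  · rintro ⟨s, hs, -, hp⟩ x b hxb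
    obtain ⟨q, hq, hxq⟩ := (hp _).1 hxb
    obtain ⟨y, d, rfl⟩ := isCoatom_iff.1 (hs q hq).1
    obtain ⟨rfl, rfl⟩ := Prod.mk.inj (Finset.mem_singleton.1 hxq)
    exact (hs _ hq).2

theorem single_mem_iff {x : X} {b : Bool} : single x b ∈ S ↔ x ∈ coords S := by
  cases b
  · exact ⟨single_bnot_mem S, single_bnot_mem S⟩
  · exact Iff.rfl

theorem range_map_subtype_coords :
    Set.range (map (Function.Embedding.subtype (· ∈ coords S))) = S := by
  ext p
  simp only [mem_range_map_iff, Function.Embedding.coe_subtype, Subtype.range_coe_subtype,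
    SetLike.mem_coe, mem_iff_forall_single_mem S (p := p), single_mem_iff, Prod.forall]
  rfl

noncomputable def orderIsoCoords : S ≃o CohenPoset (coords S) :=
  ((map _).orderIso.trans (OrderIso.setCongr _ _ (range_map_subtype_coords S))).symm

theorem setOf_isCoatom_mem_eq_range :
    {p : CohenPoset X | IsCoatom p ∧ p ∈ S} =
      Set.range fun a : coords S × Bool => single a.1.1 a.2 := by
  ext p
  simp only [Set.mem_ofPred_eq, Set.mem_range, isCoatom_iff, Prod.exists, Subtype.exists]
  constructor
  · rintro ⟨⟨x, b, rfl⟩, hp⟩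
    exact ⟨x, (single_mem_iff S).1 hp, b, rfl⟩
  · rintro ⟨x, hx, b, rfl⟩
    exact ⟨⟨x, b, rfl⟩, (single_mem_iff S).2 hx⟩

theorem mk_setOf_isCoatom_mem : #{p : CohenPoset X | IsCoatom p ∧ p ∈ S} = #(coords S × Bool) :=
  (setOf_isCoatom_mem_eq_range S).symm ▸ mk_range_eq _ fun a b h => by
    obtain ⟨hx, hb⟩ := single_inj.1 h
    exact Prod.ext (Subtype.ext hx) hb

end CohenPoset

theorem stmt10_general (kap : Cardinal)
    (Q : FirstOrder.Language.order.ElementarySubstructure (CohenPoset kap.ord.ToType))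
    (hQ : Infinite Q) :
    (∀ p : CohenPoset kap.ord.ToType, p ∈ Q ↔
      ∃ s : Finset (CohenPoset kap.ord.ToType),
        (∀ q ∈ s, IsCoatom q ∧ q ∈ Q) ∧
        (∀ q ∈ s, ∀ r ∈ s, ∃ t : CohenPoset kap.ord.ToType, t ≤ q ∧ t ≤ r) ∧
        (∀ x, x ∈ p.1 ↔ ∃ q ∈ s, x ∈ q.1)) ∧
    Nonempty (Q ≃o CohenPoset
      (Cardinal.mk {p : CohenPoset kap.ord.ToType | IsCoatom p ∧ p ∈ Q}).ord.ToType) ∧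
    Cardinal.mk {p : CohenPoset kap.ord.ToType | IsCoatom p ∧ p ∈ Q} = Cardinal.mk Q := by
  classical
  have : Infinite (CohenPoset.coords Q) :=
    CohenPoset.infinite_iff.1 ((CohenPoset.orderIsoCoords Q).toEquiv.infinite_iff.1 hQ)
  have hμ : #{p : CohenPoset kap.ord.ToType | IsCoatom p ∧ p ∈ Q} = #(CohenPoset.coords Q) := by
    rw [CohenPoset.mk_setOf_isCoatom_mem, mk_prod_bool]
  have hQμ : #Q = #(CohenPoset.coords Q) :=
    (mk_congr (CohenPoset.orderIsoCoords Q).toEquiv).trans CohenPoset.mk_eq_of_infinite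
  obtain ⟨e⟩ := Cardinal.eq.1 <| show #(CohenPoset.coords Q) =
      #(#{p : CohenPoset kap.ord.ToType | IsCoatom p ∧ p ∈ Q}).ord.ToType by
    rw [mk_toType, card_ord, hμ]
  exact ⟨CohenPoset.mem_iff_exists_finset_coatom Q,
    ⟨(CohenPoset.orderIsoCoords Q).trans (CohenPoset.congr e)⟩, hμ.trans hQμ.symm⟩

/-- Let `κ` be an infinite cardinal and let `Q` be an infinite elementary substructure
(in the language of partial orders) of the Cohen poset `Add(ω,κ)` of finite partial
functions from `κ` to `2`. Then `Q` consists exactly of those conditions that are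
unions of finite sets of pairwise compatible coatoms (single-bit conditions) of
`Add(ω,κ)` belonging to `Q`; consequently `Q` is order-isomorphic to `Add(ω,μ)`
where `μ` is the cardinality of the set of coatoms of `Add(ω,κ)` belonging to `Q`,
and `μ = |Q|`. -/
theorem stmt10 (kap : Cardinal) (hkap : Cardinal.aleph0 ≤ kap)
    (Q : FirstOrder.Language.order.ElementarySubstructure (CohenPoset kap.ord.ToType))
    (hQ : Infinite Q) :
    (∀ p : CohenPoset kap.ord.ToType, p ∈ Q ↔
      ∃ s : Finset (CohenPoset kap.ord.ToType),
        (∀ q ∈ s, IsCoatom q ∧ q ∈ Q) ∧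
        (∀ q ∈ s, ∀ r ∈ s, ∃ t : CohenPoset kap.ord.ToType, t ≤ q ∧ t ≤ r) ∧
        (∀ x, x ∈ p.1 ↔ ∃ q ∈ s, x ∈ q.1)) ∧
    Nonempty (Q ≃o CohenPoset
      (Cardinal.mk {p : CohenPoset kap.ord.ToType | IsCoatom p ∧ p ∈ Q}).ord.ToType) ∧
    Cardinal.mk {p : CohenPoset kap.ord.ToType | IsCoatom p ∧ p ∈ Q} = Cardinal.mk Q :=
  stmt10_general kap Q hQ
end

section
/- Let Q be a Knaster poset and let 0 < ε < 1. Then the ε-deficient finite-mixture termspace preorder Termfin^ε(B_null, Q) over the random algebra is also Knaster. -/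
open MeasureTheory

/-- A (pre)ordered set is Knaster if every uncountable subset has an uncountable
subset of pairwise compatible elements. -/
def IsKnaster (P : Type*) [LE P] : Prop :=
  ∀ T : Set P, ¬T.Countable →
    ∃ T' ⊆ T, ¬T'.Countable ∧ ∀ p ∈ T', ∀ q ∈ T', ∃ r, r ≤ p ∧ r ≤ q

/-- An `ε`-deficient finite mixture over the random algebra into `Q`: a finite set `A`
of Borel subsets of `[0,1]` of positive measure, pairwise intersecting in measure
zero, whose union has measure `> 1 - ε`, together with a function `f : A → Q`. -/
structure EpsMixture (Q : Type*) (ε : ℝ) where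
  A : Finset (Set ℝ)
  subset_Icc : ∀ w ∈ A, w ⊆ Set.Icc (0 : ℝ) 1
  measurableSet : ∀ w ∈ A, MeasurableSet w
  pos : ∀ w ∈ A, 0 < volume w
  almost_disjoint : ∀ w ∈ A, ∀ w' ∈ A, w ≠ w' → volume (w ∩ w') = 0
  large : ENNReal.ofReal (1 - ε) < volume (⋃₀ (A : Set (Set ℝ)))
  f : {w : Set ℝ // w ∈ A} → Q

/-- The `ε`-deficient finite-mixture termspace preorder `Termfin^ε(B_null,Q)`:
`(A',f') ≤ (A,f)` iff for every `w' ∈ A'` there is `w ∈ A` with `μ(w' \ w) = 0` and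
`f' w' ≤ f w`. -/
instance (Q : Type*) [LE Q] (ε : ℝ) : LE (EpsMixture Q ε) :=
  ⟨fun p q => ∀ w' : {w : Set ℝ // w ∈ p.A}, ∃ w : {w : Set ℝ // w ∈ q.A},
    volume ((w' : Set ℝ) \ w) = 0 ∧ p.f w' ≤ q.f w⟩

/-
Lebesgue measure is separable: a countable family `𝒜` of Borel sets approximates every Borel
set in measure. A mixture covers `1 - ε` with some slack; approximate each of its `n` pieces by
a member of `𝒜` to within a fraction of that slack. These countably many data (`n`, the slack,
the tuple of approximants) agree on an uncountable subfamily, and Knaster-ness of `Q`, applied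
once per piece, shrinks it further so that corresponding values are compatible. Any two
mixtures left are compatible: corresponding pieces differ by little measure, so their
positive-measure intersections, labelled by common lower bounds of the values, still cover
more than `1 - ε`.
-/

open Set Function
open scoped symmDiff

theorem Set.exists_not_countable_fiber {α β : Type*} {S : Set α} (hS : ¬S.Countable)
    {c : α → β} (hc : (c '' S).Countable) : ∃ b, ¬{x ∈ S | c x = b}.Countable := by
  by_contra! h
  exact hS <| (hc.biUnion fun b _ => h b).mono fun x hx =>
    mem_biUnion (mem_image_of_mem c hx) (show x ∈ {y ∈ S | c y = c x} from ⟨hx, rfl⟩)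

namespace IsKnaster

variable {α Q : Type*} [Preorder Q]

theorem exists_not_countable_compatible_comp (hQ : IsKnaster Q) {S : Set α}
    (hS : ¬S.Countable) (g : α → Q) :
    ∃ S' ⊆ S, ¬S'.Countable ∧ ∀ a ∈ S', ∀ b ∈ S', ∃ z, z ≤ g a ∧ z ≤ g b := by
  by_cases hgS : (g '' S).Countable
  · obtain ⟨v, hv⟩ := exists_not_countable_fiber hS hgS
    refine ⟨_, sep_subset _ _, hv, ?_⟩
    rintro a ⟨-, rfl⟩ b ⟨-, hb⟩
    exact ⟨g a, le_rfl, hb.ge⟩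
  · obtain ⟨V, hVS, hV, hVcompat⟩ := hQ (g '' S) hgS
    refine ⟨{a ∈ S | g a ∈ V}, sep_subset _ _, fun h => hV ?_, ?_⟩
    · refine (h.image g).mono fun v hv => ?_
      obtain ⟨a, ha, rfl⟩ := hVS hv
      exact ⟨a, ⟨ha, hv⟩, rfl⟩
    · rintro a ⟨-, ha⟩ b ⟨-, hb⟩
      exact hVcompat _ ha _ hb

theorem exists_not_countable_compatible_finset {ι : Type*} (hQ : IsKnaster Q) (s : Finset ι)
    {S : Set α} (hS : ¬S.Countable) (g : α → ι → Q) :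
    ∃ S' ⊆ S, ¬S'.Countable ∧ ∀ a ∈ S', ∀ b ∈ S', ∀ i ∈ s, ∃ z, z ≤ g a i ∧ z ≤ g b i := by
  classical
  induction s using Finset.induction_on with
  | empty => exact ⟨S, subset_rfl, hS, by simp⟩
  | insert i s _ ih =>
    obtain ⟨S₁, hS₁S, hS₁, hs⟩ := ih
    obtain ⟨S₂, hS₂S₁, hS₂, hi⟩ := hQ.exists_not_countable_compatible_comp hS₁ fun a => g a i
    refine ⟨S₂, hS₂S₁.trans hS₁S, hS₂, fun a ha b hb j hj => ?_⟩
    rcases Finset.mem_insert.1 hj with rfl | hj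
    · exact hi a ha b hb
    · exact hs a (hS₂S₁ ha) b (hS₂S₁ hb) j hj

end IsKnaster

theorem ENNReal.exists_nat_add_mul_one_div_lt {a b : ENNReal} (h : a < b) {c : ENNReal}
    (hc : c ≠ ⊤) : ∃ k : ℕ, a + c * ENNReal.ofReal (1 / (k + 1)) < b := by
  have hlim : Filter.Tendsto (fun k : ℕ => a + c * ENNReal.ofReal (1 / (k + 1))) Filter.atTop
      (nhds a) := by
    have hη := ENNReal.tendsto_ofReal (tendsto_one_div_add_atTop_nhds_zero_nat (𝕜 := ℝ))
    simpa using (ENNReal.Tendsto.const_mul hη (Or.inr hc)).const_add a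
  exact (hlim.eventually (gt_mem_nhds h)).exists

namespace EpsMixture

variable {Q : Type*} {ε : ℝ}

theorem volume_ne_top (p : EpsMixture Q ε) {w : Set ℝ} (hw : w ∈ p.A) : volume w ≠ ⊤ :=
  ne_top_of_le_ne_top (by simp [Real.volume_Icc]) (measure_mono (p.subset_Icc w hw))

theorem exists_of_family {ι : Type*} [Fintype ι] (v : ι → Set ℝ) (hv : ∀ i, v i ⊆ Icc 0 1)
    (hmeas : ∀ i, MeasurableSet (v i)) (hdisj : Pairwise (AEDisjoint volume on v))
    (hlarge : ENNReal.ofReal (1 - ε) < volume (⋃ i, v i)) (g : ι → Q) :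
    ∃ r : EpsMixture Q ε, ∀ w : r.A, ∃ i, (w : Set ℝ) = v i ∧ r.f w = g i := by
  classical
  let I := Finset.univ.filter fun i => volume (v i) ≠ 0
  let J := Finset.univ.filter fun i => volume (v i) = 0
  have hnull : volume (⋃ i ∈ (J : Set ι), v i) = 0 :=
    (measure_biUnion_null_iff (Finset.countable_toSet _)).2 fun i hi => (Finset.mem_filter.1 hi).2
  have hcover : ⋃ i, v i ⊆ (⋃ i ∈ (I : Set ι), v i) ∪ ⋃ i ∈ (J : Set ι), v i := by
    refine iUnion_subset fun i x hx => ?_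
    by_cases hi : volume (v i) = 0
    · exact Or.inr (mem_biUnion (by simpa [J] using hi) hx)
    · exact Or.inl (mem_biUnion (by simpa [I] using hi) hx)
  refine ⟨{ A := I.image v
            subset_Icc := ?_
            measurableSet := ?_
            pos := ?_
            almost_disjoint := ?_
            large := ?_
            f := fun w => g (Finset.mem_image.1 w.2).choose },
    fun w => ⟨_, (Finset.mem_image.1 w.2).choose_spec.2.symm, rfl⟩⟩
  · exact Finset.forall_mem_image.2 fun i _ => hv i
  · exact Finset.forall_mem_image.2 fun i _ => hmeas i
  · exact Finset.forall_mem_image.2 fun i hi => pos_iff_ne_zero.2 (Finset.mem_filter.1 hi).2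
  · exact Finset.forall_mem_image.2 fun i _ =>
      Finset.forall_mem_image.2 fun j _ hij => hdisj fun h => hij (h ▸ rfl)
  · calc ENNReal.ofReal (1 - ε) < volume (⋃ i, v i) := hlarge
      _ ≤ volume ((⋃ i ∈ (I : Set ι), v i) ∪ ⋃ i ∈ (J : Set ι), v i) := measure_mono hcover
      _ ≤ volume (⋃ i ∈ (I : Set ι), v i) + volume (⋃ i ∈ (J : Set ι), v i) :=
        measure_union_le _ _
      _ = volume (⋃ i ∈ (I : Set ι), v i) := by rw [hnull, add_zero]
      _ = volume (⋃₀ (I.image v : Set (Set ℝ))) := by rw [Finset.coe_image, sUnion_image]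

variable [Preorder Q]

theorem exists_le_le_of_matching (p q : EpsMixture Q ε) {ι : Type*} [Fintype ι] (a : ι ≃ p.A)
    (b : ι → q.A) (hcompat : ∀ i, ∃ z, z ≤ p.f (a i) ∧ z ≤ q.f (b i))
    (hvol : ENNReal.ofReal (1 - ε) + ∑ i, volume ((a i : Set ℝ) \ b i) <
      volume (⋃₀ (p.A : Set (Set ℝ)))) :
    ∃ r, r ≤ p ∧ r ≤ q := by
  choose z hzp hzq using hcompat
  have hcover : ⋃₀ (p.A : Set (Set ℝ)) ⊆
      (⋃ i, (a i : Set ℝ) ∩ b i) ∪ ⋃ i, (a i : Set ℝ) \ b i := by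
    rintro x ⟨w, hw, hx⟩
    obtain ⟨i, hi⟩ := a.surjective ⟨w, hw⟩
    replace hx : x ∈ (a i : Set ℝ) := by rwa [hi]
    by_cases hxb : x ∈ (b i : Set ℝ)
    · exact Or.inl (mem_iUnion.2 ⟨i, hx, hxb⟩)
    · exact Or.inr (mem_iUnion.2 ⟨i, hx, hxb⟩)
  have hlarge : ENNReal.ofReal (1 - ε) < volume (⋃ i, (a i : Set ℝ) ∩ b i) := by
    have hsum : ∑ i, volume ((a i : Set ℝ) \ b i) ≠ ⊤ :=
      (le_add_self.trans_lt (hvol.trans_le le_top)).ne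
    rw [← ENNReal.add_lt_add_iff_right hsum]
    calc _ < volume (⋃₀ (p.A : Set (Set ℝ))) := hvol
      _ ≤ volume ((⋃ i, (a i : Set ℝ) ∩ b i) ∪ ⋃ i, (a i : Set ℝ) \ b i) := measure_mono hcover
      _ ≤ volume (⋃ i, (a i : Set ℝ) ∩ b i) + volume (⋃ i, (a i : Set ℝ) \ b i) :=
        measure_union_le _ _
      _ ≤ _ := by gcongr; exact measure_iUnion_fintype_le _ _
  obtain ⟨r, hr⟩ := exists_of_family (fun i => (a i : Set ℝ) ∩ b i)
    (fun i => inter_subset_left.trans (p.subset_Icc _ (a i).2))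
    (fun i => (p.measurableSet _ (a i).2).inter (q.measurableSet _ (b i).2))
    (fun i j hij => AEDisjoint.mono (p.almost_disjoint _ (a i).2 _ (a j).2
      fun h => hij (a.injective (Subtype.ext h))) inter_subset_left inter_subset_left)
    hlarge z
  refine ⟨r, fun w => ?_, fun w => ?_⟩
  · obtain ⟨i, hw, hf⟩ := hr w
    refine ⟨a i, ?_, hf ▸ hzp i⟩
    rw [hw, sdiff_eq_empty.2 inter_subset_left, measure_empty]
  · obtain ⟨i, hw, hf⟩ := hr w
    refine ⟨b i, ?_, hf ▸ hzq i⟩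
    rw [hw, sdiff_eq_empty.2 inter_subset_right, measure_empty]

theorem exists_not_countable_compatible_of_enum (hQ : IsKnaster Q) {α : Type*} {n : ℕ}
    (P : α → EpsMixture Q ε) (e : ∀ a, Fin n ≃ (P a).A) {S : Set α} (hS : ¬S.Countable) :
    ∃ S' ⊆ S, ¬S'.Countable ∧ ∀ a ∈ S', ∀ b ∈ S', ∃ r, r ≤ P a ∧ r ≤ P b := by
  obtain ⟨𝒜, h𝒜, hdense⟩ := exists_countable_measureDense (volume : Measure ℝ)
  have := h𝒜.to_subtype
  choose k hk using fun a => ENNReal.exists_nat_add_mul_one_div_lt (P a).large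
    (c := 2 * n) (ENNReal.mul_ne_top ENNReal.ofNat_ne_top (ENNReal.natCast_ne_top n))
  have happrox (a : α) (i : Fin n) :
      ∃ t : 𝒜, volume ((e a i : Set ℝ) ∆ t) < ENNReal.ofReal (1 / (k a + 1)) := by
    obtain ⟨t, ht, h⟩ := hdense.approx _ ((P a).measurableSet _ (e a i).2)
      ((P a).volume_ne_top (e a i).2) _ Nat.one_div_pos_of_nat
    exact ⟨⟨t, ht⟩, h⟩
  choose t ht using happrox
  obtain ⟨c, hc⟩ := exists_not_countable_fiber hS (c := fun a => (k a, t a)) (to_countable _)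
  obtain ⟨S', hS'c, hS', hcompat⟩ :=
    hQ.exists_not_countable_compatible_finset Finset.univ hc fun a i => (P a).f (e a i)
  refine ⟨S', hS'c.trans (sep_subset _ _), hS', fun a ha b hb => ?_⟩
  obtain ⟨hkab, htab⟩ := Prod.mk.inj ((hS'c ha).2.trans (hS'c hb).2.symm)
  have hpiece (i : Fin n) :
      volume ((e a i : Set ℝ) \ e b i) ≤ 2 * ENNReal.ofReal (1 / (k a + 1)) := by
    calc _ ≤ volume ((e a i : Set ℝ) ∆ e b i) := measure_mono subset_union_left
      _ ≤ volume ((e a i : Set ℝ) ∆ t a i) + volume ((t a i : Set ℝ) ∆ e b i) :=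
        measure_symmDiff_le _ _ _
      _ ≤ _ := by
        rw [two_mul]
        refine add_le_add (ht a i).le ?_
        rw [symmDiff_comm, htab, hkab]
        exact (ht b i).le
  refine (P a).exists_le_le_of_matching (P b) (e a) (e b)
    (fun i => hcompat a ha b hb i (Finset.mem_univ i)) ?_
  calc _ ≤ ENNReal.ofReal (1 - ε) + ∑ _i : Fin n, 2 * ENNReal.ofReal (1 / (k a + 1)) := by
        gcongr with i; exact hpiece i
    _ = ENNReal.ofReal (1 - ε) + 2 * n * ENNReal.ofReal (1 / (k a + 1)) := by
        simp only [Finset.sum_const, Finset.card_univ, Fintype.card_fin, nsmul_eq_mul]; ring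
    _ < _ := hk a

end EpsMixture

open EpsMixture in
theorem stmt12_general (Q : Type*) [PartialOrder Q] (ε : ℝ)
    (hQ : IsKnaster Q) : IsKnaster (EpsMixture Q ε) := by
  intro T hT
  obtain ⟨n, hn⟩ := exists_not_countable_fiber hT (c := fun p => p.A.card) (to_countable _)
  let S : Set {p : EpsMixture Q ε // p.A.card = n} := {p | p.1 ∈ T}
  have hS : ¬S.Countable := by
    refine fun h => hn ((h.image Subtype.val).mono ?_)
    rintro p ⟨hpT, hpn⟩
    exact ⟨⟨p, hpn⟩, hpT, rfl⟩
  obtain ⟨S', hS'S, hS', hcompat⟩ := exists_not_countable_compatible_of_enum hQ Subtype.val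
    (fun p => (p.1.A.equivFin.trans (finCongr p.2)).symm) hS
  refine ⟨Subtype.val '' S', ?_,
    fun h => hS' (countable_of_injective_of_countable_image Subtype.val_injective.injOn h), ?_⟩
  · rintro _ ⟨p, hp, rfl⟩
    exact hS'S hp
  · rintro _ ⟨p, hp, rfl⟩ _ ⟨q, hq, rfl⟩
    exact hcompat p hp q hq

/-- If `Q` is a Knaster poset and `0 < ε < 1`, then the `ε`-deficient finite-mixture
termspace preorder `Termfin^ε(B_null,Q)` over the random algebra is Knaster as well. -/
theorem stmt12 (Q : Type*) [PartialOrder Q] (ε : ℝ) (hε0 : 0 < ε) (hε1 : ε < 1)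
    (hQ : IsKnaster Q) : IsKnaster (EpsMixture Q ε) :=
  stmt12_general Q ε hQ
end
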